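/- Min-combination tightening inequality: for real sequences (η_l), (η̂_{i,l}) define η̃_l,j = min_{i=0,...,l−1} (η̂_{i,l} + η_{l−i}) where η̂_{i,l} = min_{w_1,...,w_i ∈ W_f} ( − h · Σ_{κ=1}^{i} a^{l−κ} b w_κ ) for scalars a, b, h and a compact set W_f ⊆ ℝ. Then for any w ∈ W_f: η̃_{l+1} + h a^{l} b w ≤ η̃_{l}, i.e., the tightened bounds are recursively compatible under one disturbance step. -/

import Mathlib

/-!
Every candidate `η̂_{i,l} + η_{l-i}` (`i < l`) of the minimum defining `η̃_l` is matched by the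
candidate `η̂_{i+1,l+1} + η_{l-i}` of `η̃_{l+1}`. Prepending the disturbance `w` to a sequence of
length `i` shifts all exponents by one and adds the term `-h a^l b w`, so
`η̂_{i+1,l+1} + h a^l b w ≤ η̂_{i,l}`.
-/

/-- `η̂_{i,l} = min over w_1,...,w_i ∈ W_f of  −h · Σ_{κ=1}^{i} a^{l−κ} b w_κ`. -/
noncomputable def etaHat (a b h : ℝ) (Wf : Set ℝ) (i l : ℕ) : ℝ :=
  sInf {x : ℝ | ∃ w : Fin i → ℝ, (∀ κ, w κ ∈ Wf) ∧
    x = -(∑ κ : Fin i, h * a ^ (l - (κ.1 + 1)) * b * w κ)}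

/-- `η̃_l = min_{i=0,…,l−1} (η̂_{i,l} + η_{l−i})`. -/
noncomputable def etaTilde (a b h : ℝ) (Wf : Set ℝ) (η : ℕ → ℝ) (l : ℕ) : ℝ :=
  sInf {x : ℝ | ∃ i < l, x = etaHat a b h Wf i l + η (l - i)}

lemma bddBelow_neg_sum_mul_of_isBounded {n : ℕ} (c : Fin n → ℝ) {S : Set ℝ}
    (hS : Bornology.IsBounded S) :
    BddBelow {x : ℝ | ∃ w : Fin n → ℝ, (∀ κ, w κ ∈ S) ∧ x = -(∑ κ, c κ * w κ)} := by
  obtain ⟨M, hM⟩ := isBounded_iff_forall_norm_le.mp hS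
  refine ⟨-(∑ κ, |c κ| * M), ?_⟩
  rintro x ⟨w, hw, rfl⟩
  have hterm (κ : Fin n) : c κ * w κ ≤ |c κ| * M :=
    calc c κ * w κ ≤ |c κ * w κ| := le_abs_self _
      _ = |c κ| * |w κ| := abs_mul _ _
      _ ≤ |c κ| * M := mul_le_mul_of_nonneg_left (hM _ (hw κ)) (abs_nonneg _)
  exact neg_le_neg (Finset.sum_le_sum fun κ _ ↦ hterm κ)

lemma sum_pow_sub_mul_cons (a b h w : ℝ) {i : ℕ} (l : ℕ) (v : Fin i → ℝ) :
    ∑ κ : Fin (i + 1), h * a ^ (l + 1 - (κ.1 + 1)) * b * (Fin.cons w v : Fin (i + 1) → ℝ) κ =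
      h * a ^ l * b * w + ∑ κ : Fin i, h * a ^ (l - (κ.1 + 1)) * b * v κ := by
  simp only [Fin.sum_univ_succ, Fin.val_zero, Fin.val_succ, Fin.cons_zero, Fin.cons_succ,
    Nat.add_sub_add_right, Nat.sub_zero]

lemma etaHat_succ_succ_add_le (a b h : ℝ) {Wf : Set ℝ} (hWf : Bornology.IsBounded Wf)
    {w : ℝ} (hw : w ∈ Wf) (i l : ℕ) :
    etaHat a b h Wf (i + 1) (l + 1) + h * a ^ l * b * w ≤ etaHat a b h Wf i l := by
  unfold etaHat
  apply le_csInf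
  · exact ⟨_, fun _ ↦ w, fun _ ↦ hw, rfl⟩
  rintro x ⟨v, hv, rfl⟩
  rw [← le_sub_iff_add_le]
  refine csInf_le (bddBelow_neg_sum_mul_of_isBounded _ hWf)
    ⟨Fin.cons w v, Fin.cases hw hv, rfl⟩ |>.trans_eq ?_
  rw [sum_pow_sub_mul_cons]
  ring

lemma etaTilde_le_etaHat_add (a b h : ℝ) (Wf : Set ℝ) (η : ℕ → ℝ) {i l : ℕ} (hi : i < l) :
    etaTilde a b h Wf η l ≤ etaHat a b h Wf i l + η (l - i) := by
  refine csInf_le ?_ ⟨i, hi, rfl⟩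
  have hfin : {x : ℝ | ∃ i < l, x = etaHat a b h Wf i l + η (l - i)} =
      (fun j ↦ etaHat a b h Wf j l + η (l - j)) '' Set.Iio l := by
    ext x; simp [eq_comm]
  exact hfin ▸ ((Set.finite_Iio l).image _).bddBelow

theorem stmt_16_general (a b h : ℝ) (Wf : Set ℝ) (hWfc : IsCompact Wf)
    (η : ℕ → ℝ) (l : ℕ) (hl : 1 ≤ l) :
    ∀ w ∈ Wf,
      etaTilde a b h Wf η (l + 1) + h * a ^ l * b * w ≤ etaTilde a b h Wf η l := by
  intro w hw
  refine le_csInf ⟨_, 0, hl, rfl⟩ ?_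
  rintro x ⟨i, hi, rfl⟩
  calc etaTilde a b h Wf η (l + 1) + h * a ^ l * b * w
      ≤ etaHat a b h Wf (i + 1) (l + 1) + η (l - i) + h * a ^ l * b * w := by
        gcongr
        simpa only [Nat.add_sub_add_right] using
          etaTilde_le_etaHat_add a b h Wf η (Nat.add_lt_add_right hi 1)
    _ ≤ etaHat a b h Wf i l + η (l - i) := by
        linarith [etaHat_succ_succ_add_le a b h hWfc.isBounded hw i l]

theorem stmt_16 (a b h : ℝ) (Wf : Set ℝ) (hWfc : IsCompact Wf) (hWfne : Wf.Nonempty)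
    (η : ℕ → ℝ) (l : ℕ) (hl : 1 ≤ l) :
    ∀ w ∈ Wf,
      etaTilde a b h Wf η (l + 1) + h * a ^ l * b * w ≤ etaTilde a b h Wf η l :=
  stmt_16_general a b h Wf hWfc η l hl
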